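/- Assume the interaction graph G = (V, I) is acyclic. Then w_{{i,j}} > 0 for every edge {i,j} ∈ I. -/

import Mathlib

open Finset

/-- The sigmoid function `σ(t) = eᵗ/(1+eᵗ)`. -/
noncomputable def sigmoid (t : ℝ) : ℝ := Real.exp t / (1 + Real.exp t)

/-- Interpretation of a Boolean as `±1 ∈ ℝ`. -/
def pm (b : Bool) : ℝ := if b then 1 else -1

/-- `Σ_{{i,j}∈E} β_{{i,j}} x_i x_j`, summed over unordered pairs of distinct indices. -/
noncomputable def fld (d : ℕ) (β : Fin d → Fin d → ℝ) (x : Fin d → Bool) : ℝ :=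
  ∑ i : Fin d, ∑ j ∈ Finset.Ioi i, β i j * pm (x i) * pm (x j)

/-- `Pr(y = s·(+1) | x_V ∈ A)`.  Since the covariates are i.i.d. uniform on `{−1,+1}`
and `Pr(y = s | x_V = x) = σ(s · Σ β x_i x_j)`, this conditional probability equals
`(Σ_{x∈A} σ(s · fld x)) / |A|`. -/
noncomputable def condProbY (d : ℕ) (β : Fin d → Fin d → ℝ) (s : ℝ)
    (A : Finset (Fin d → Bool)) : ℝ :=
  (∑ x ∈ A, sigmoid (s * fld d β x)) / A.card

open scoped Classical in
/-- The influence `w_e = |2·Pr(y = +1 | x_i = +1, x_j = +1) − 1|` for `e = {i,j}`. -/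
noncomputable def wgt (d : ℕ) (β : Fin d → Fin d → ℝ) (e : Sym2 (Fin d)) : ℝ :=
  |2 * condProbY d β 1 (Finset.univ.filter (fun x => ∀ v ∈ e, x v = true)) - 1|

/-- The interaction graph `G = (V, I)` with `I = {{i,j} : β_{{i,j}} ≠ 0}`. -/
def interGraph (d : ℕ) (β : Fin d → Fin d → ℝ) : SimpleGraph (Fin d) :=
  SimpleGraph.fromRel (fun i j => β i j ≠ 0)

/-!
Write `g(t) = 2σ(t) − 1 = tanh(t/2)` and `A = {x : x_i = x_j = +1}`, so that
`w_{{i,j}} = |Σ_{x∈A} g(f(x))| / |A|` with `f = fld`. Removing the edge `{i,j}` from the forest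
`G` disconnects `i` from `j`, so `G` minus that edge has a proper 2-colouring `c` with
`c_i = c_j = −1`. Flipping the signs of `x` on the vertices coloured `+1` is an involution of `A`
which negates every interaction term except `β_{ij} x_i x_j = β_{ij}`, i.e. `f ↦ 2β_{ij} − f`.
Pairing `x` with its image, `2 Σ_A g(f) = Σ_A (g(f) + g(2β_{ij} − f))`, and since `g` is odd and
strictly increasing every summand has the sign of `β_{ij} ≠ 0`.
-/

open SimpleGraph

theorem sigmoid_eq_real_sigmoid : sigmoid = Real.sigmoid := by
  funext t
  rw [sigmoid, Real.sigmoid_def, Real.exp_neg]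
  field_simp [(Real.exp_pos t).ne']
  ring

theorem strictMono_two_mul_sigmoid_sub_one : StrictMono fun t => 2 * sigmoid t - 1 := by
  intro a b hab
  have := Real.sigmoid_strictMono hab
  simp only [sigmoid_eq_real_sigmoid]
  linarith

theorem two_mul_sigmoid_neg_sub_one (t : ℝ) :
    2 * sigmoid (-t) - 1 = -(2 * sigmoid t - 1) := by
  rw [sigmoid_eq_real_sigmoid, Real.sigmoid_neg]
  ring

section OddStrictMono

variable {g : ℝ → ℝ} (hg : StrictMono g) (hodd : ∀ t, g (-t) = -g t)
include hg hodd

theorem StrictMono.add_pos_of_odd {x y : ℝ} (h : 0 < x + y) : 0 < g x + g y := by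
  have := hg (show -y < x by linarith)
  rw [hodd] at this
  linarith

theorem StrictMono.add_neg_of_odd {x y : ℝ} (h : x + y < 0) : g x + g y < 0 := by
  have := hg (show x < -y by linarith)
  rw [hodd] at this
  linarith

theorem StrictMono.sum_comp_ne_zero_of_involution {α : Type*} {A : Finset α} (hA : A.Nonempty)
    {f : α → ℝ} {ψ : α → α} (hψA : ∀ x ∈ A, ψ x ∈ A) (hψ : ∀ x ∈ A, ψ (ψ x) = x) {s : ℝ}
    (hs : s ≠ 0) (hf : ∀ x ∈ A, f (ψ x) + f x = s) :
    ∑ x ∈ A, g (f x) ≠ 0 := by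
  have hreindex : ∑ x ∈ A, g (f (ψ x)) = ∑ x ∈ A, g (f x) :=
    Finset.sum_nbij' ψ ψ hψA hψA hψ hψ fun _ _ => rfl
  have hpaired : 2 * ∑ x ∈ A, g (f x) = ∑ x ∈ A, (g (f (ψ x)) + g (f x)) := by
    rw [Finset.sum_add_distrib, hreindex]
    ring
  rcases hs.lt_or_gt with hneg | hpos
  · have : ∑ x ∈ A, (g (f (ψ x)) + g (f x)) < 0 :=
      Finset.sum_neg (fun x hx => hg.add_neg_of_odd hodd (hf x hx ▸ hneg)) hA
    linarith
  · have : 0 < ∑ x ∈ A, (g (f (ψ x)) + g (f x)) :=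
      Finset.sum_pos (fun x hx => hg.add_pos_of_odd hodd (hf x hx ▸ hpos)) hA
    linarith

end OddStrictMono

theorem pm_xor (u v : Bool) : pm (xor u v) = -(pm u * pm v) := by
  cases u <;> cases v <;> simp [pm]

theorem pm_mul_pm_of_ne {u v : Bool} (h : u ≠ v) : pm u * pm v = -1 := by
  cases u <;> cases v <;> simp_all [pm]

theorem pm_mul_self (u : Bool) : pm u * pm u = 1 := by
  cases u <;> simp [pm]

theorem SimpleGraph.IsAcyclic.exists_coloring_deleteEdges {V : Type*} {G : SimpleGraph V}
    (hG : G.IsAcyclic) {i j : V} (hij : G.Adj i j) :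
    ∃ c : V → Bool, c i = false ∧ c j = false ∧
      ∀ a b, (G.deleteEdges {s(i, j)}).Adj a b → c a ≠ c b := by
  classical
  set G₀ := G.deleteEdges {s(i, j)}
  have hbridge : ¬ G₀.Reachable i j := isAcyclic_iff_forall_adj_isBridge.mp hG hij
  have hG₀ : G₀.IsAcyclic := hG.anti (deleteEdges_le _)
  let κ := hG₀.coloringTwo
  -- `{i,j}` is a bridge, so the two sides of it can be recoloured independently.
  let root : V → V := fun v => if G₀.Reachable i v then i else j
  refine ⟨fun v => decide (κ v ≠ κ (root v)), by simp [root], by simp [root, hbridge], ?_⟩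
  intro a b hab
  have hreach : G₀.Reachable i a ↔ G₀.Reachable i b :=
    ⟨fun h => h.trans hab.reachable, fun h => h.trans hab.reachable.symm⟩
  have hroot : root a = root b := by simp only [root, hreach]
  have hκ : κ a ≠ κ b := κ.valid hab
  simp only [hroot]
  -- among two colours `κ a ≠ κ b`, exactly one equals `κ (root b)`
  revert hκ
  generalize κ a = p, κ b = q, κ (root b) = r
  revert p q r
  decide

theorem fld_xor_add_fld {d : ℕ} {β : Fin d → Fin d → ℝ} {i j : Fin d} (hij : i < j)
    {c : Fin d → Bool} (hcij : c i = c j)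
    (hc : ∀ a b, ((interGraph d β).deleteEdges {s(i, j)}).Adj a b → c a ≠ c b)
    (x : Fin d → Bool) :
    fld d β (fun v => xor (x v) (c v)) + fld d β x = 2 * β i j * pm (x i) * pm (x j) := by
  have hterm : ∀ a b, β a b * pm (xor (x a) (c a)) * pm (xor (x b) (c b))
      + β a b * pm (x a) * pm (x b) = β a b * pm (x a) * pm (x b) * (1 + pm (c a) * pm (c b)) := by
    intro a b
    rw [pm_xor, pm_xor]
    ring
  have hzero : ∀ a b, a < b → s(a, b) ≠ s(i, j) →
      β a b * pm (x a) * pm (x b) * (1 + pm (c a) * pm (c b)) = 0 := by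
    intro a b hab hne
    by_cases hβ : β a b = 0
    · simp [hβ]
    · have hadj : ((interGraph d β).deleteEdges {s(i, j)}).Adj a b := by
        simp [interGraph, hab.ne, hβ, hne]
      rw [pm_mul_pm_of_ne (hc a b hadj)]
      ring
  unfold fld
  simp only [← Finset.sum_add_distrib, hterm]
  rw [Finset.sum_eq_single_of_mem i (Finset.mem_univ _), Finset.sum_eq_single_of_mem j
    (Finset.mem_Ioi.2 hij), hcij, pm_mul_self]
  · ring
  · intro b hb hbj
    exact hzero i b (Finset.mem_Ioi.1 hb) (by simp [hbj, hij.ne])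
  · intro a _ hai
    refine Finset.sum_eq_zero fun b hb => hzero a b (Finset.mem_Ioi.1 hb) ?_
    simp only [ne_eq, Sym2.eq_iff, hai, false_and, false_or, not_and]
    rintro rfl rfl
    exact hij.not_gt (Finset.mem_Ioi.1 hb)

theorem two_mul_condProbY_sub_one {d : ℕ} (β : Fin d → Fin d → ℝ) {A : Finset (Fin d → Bool)}
    (hA : A.Nonempty) :
    2 * condProbY d β 1 A - 1 = (∑ x ∈ A, (2 * sigmoid (fld d β x) - 1)) / A.card := by
  have hcard : (A.card : ℝ) ≠ 0 := Nat.cast_ne_zero.2 hA.card_pos.ne'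
  simp only [condProbY, one_mul, Finset.sum_sub_distrib, ← Finset.mul_sum, Finset.sum_const,
    nsmul_eq_mul, mul_one]
  field_simp [hcard]

theorem abs_two_mul_condProbY_sub_one_pos {d : ℕ} {β : Fin d → Fin d → ℝ}
    (hacyc : (interGraph d β).IsAcyclic) {i j : Fin d} (hij : i < j) (hβ : β i j ≠ 0)
    {A : Finset (Fin d → Bool)} (hmem : ∀ x, x ∈ A ↔ x i = true ∧ x j = true) :
    0 < |2 * condProbY d β 1 A - 1| := by
  have hadj : (interGraph d β).Adj i j := by simp [interGraph, hij.ne, hβ]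
  obtain ⟨c, hci, hcj, hc⟩ := hacyc.exists_coloring_deleteEdges hadj
  have hA : A.Nonempty := ⟨fun _ => true, (hmem _).2 ⟨rfl, rfl⟩⟩
  rw [two_mul_condProbY_sub_one β hA, abs_pos]
  refine div_ne_zero ?_ (Nat.cast_ne_zero.2 hA.card_pos.ne')
  refine strictMono_two_mul_sigmoid_sub_one.sum_comp_ne_zero_of_involution
    two_mul_sigmoid_neg_sub_one hA (ψ := fun x v => xor (x v) (c v)) ?_ ?_
    (mul_ne_zero two_ne_zero hβ) ?_
  · intro x hx
    rw [hmem] at hx ⊢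
    simp [hx, hci, hcj]
  · intro x _
    simp
  · intro x hx
    obtain ⟨hxi, hxj⟩ := (hmem x).1 hx
    rw [fld_xor_add_fld hij (hci.trans hcj.symm) hc, hxi, hxj]
    simp [pm]

theorem statement1_general (d : ℕ) (β : Fin d → Fin d → ℝ)
    (hsymm : ∀ i j, β i j = β j i)
    (hacyc : (interGraph d β).IsAcyclic)
    (i j : Fin d) (hij : i ≠ j) (hβ : β i j ≠ 0) :
    0 < wgt d β s(i, j) := by
  wlog hlt : i < j generalizing i j
  · rw [Sym2.eq_swap]
    exact this j i hij.symm (hsymm i j ▸ hβ) (hij.symm.lt_of_le (not_lt.1 hlt))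
  unfold wgt
  exact abs_two_mul_condProbY_sub_one_pos hacyc hlt hβ fun x => by simp

/-- Proposition 2, Direct influence: if the interaction graph is acyclic,
then `w_{{i,j}} > 0` for every edge `{i,j} ∈ I`. -/
theorem statement1 (d : ℕ) (hd : 2 ≤ d) (β : Fin d → Fin d → ℝ)
    (hsymm : ∀ i j, β i j = β j i)
    (hacyc : (interGraph d β).IsAcyclic)
    (i j : Fin d) (hij : i ≠ j) (hβ : β i j ≠ 0) :
    0 < wgt d β s(i, j) :=
  statement1_general d β hsymm hacyc i j hij hβ
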